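/- In the two-type example, if δ < 1 and θ_L < θ_H, the average firm operating in steady state makes strictly positive profit: with p^e the price satisfying Λ_L π(p^e,θ_L) + Λ_H π(p^e,θ_H) = 0 and q^e = q(p^e) > 0, one has μ_L π(p^e,θ_L) + μ_H π(p^e,θ_H) > 0, where μ_L = 1/(2ρ), μ_H = 1/2, Λ_L = 1/(2(1−δ(1−ρ))), Λ_H = 1/2, provided π(p^e,θ_L) > 0 > π(p^e,θ_H). -/
import Mathlib

/-- in the two-type example with δ < 1 and θ_L < θ_H, the average
firm operating in steady state makes strictly positive profit: if p^e satisfies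
the zero-entry-profit condition Λ_L π(p^e,θ_L) + Λ_H π(p^e,θ_H) = 0 with
q(p^e) > 0 and π(p^e,θ_L) > 0 > π(p^e,θ_H), then
μ_L π(p^e,θ_L) + μ_H π(p^e,θ_H) > 0, where μ_L = 1/(2ρ), μ_H = 1/2,
Λ_L = 1/(2(1−δ(1−ρ))), Λ_H = 1/2, and π(p,θ) = p q(p) − c(q(p)) − θ. -/
theorem steady_state_positive_profit
    (δ ρ θL θH : ℝ) (hδ0 : 0 ≤ δ) (hδ1 : δ < 1) (hρ0 : 0 < ρ) (hρ1 : ρ < 1)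
    (hθ : θL < θH)
    (c : ℝ → ℝ) (q : ℝ → ℝ) (pe : ℝ)
    (π : ℝ → ℝ → ℝ)
    (hπ : ∀ p θ, π p θ = p * q p - c (q p) - θ)
    (hqpos : 0 < q pe)
    (hzero : (1 / (2 * (1 - δ * (1 - ρ)))) * π pe θL + (1 / 2) * π pe θH = 0)
    (hL : 0 < π pe θL) (hH : π pe θH < 0) :
    0 < (1 / (2 * ρ)) * π pe θL + (1 / 2) * π pe θH := by
  have hd : ρ < 1 - δ * (1 - ρ) := by nlinarith
  have hpos : 0 < 1 - δ * (1 - ρ) := lt_trans hρ0 hd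
  have hlt : 1 / (2 * (1 - δ * (1 - ρ))) < 1 / (2 * ρ) := by
    apply one_div_lt_one_div_of_lt (by positivity)
    linarith
  nlinarith
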